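/- Let G = (V,E) be a finite simple undirected graph with positive edge weights and unique shortest paths, let s, v, x, y be vertices with d_G(v,x) ≤ d_G(s,v), d_G(x,y) ≤ 2 · d_G(s,v), and d_G(y,s) ≤ 4 · d_G(s,v), and let f ∈ E be an edge such that s and v are connected in G − f, f lies on π(s,v), f lies on π(v,x), f lies on π(x,y), and f does not lie on π(y,s). Then d_{G−f}(v,x) + d_{G−f}(x,y) + d_{G−f}(y,s) ≤ 13 · d_{G−f}(s,v). (Case 7 in the proof of Lemma 4.1.) -/

import Mathlib

open scoped ENNReal

variable {V : Type*}

/-- The total weight of a walk: the sum of the weights of its edges (in `ℝ≥0∞`). -/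
noncomputable def walkWeight {G : SimpleGraph V} (wt : Sym2 V → NNReal)
    {u v : V} (p : G.Walk u v) : ℝ≥0∞ :=
  (p.edges.map (fun e => (wt e : ℝ≥0∞))).sum

/-- The weighted shortest-path distance: the infimum over all walks from `u` to `v`
of their total weight (in `ℝ≥0∞`, so it is `∞` if `u` and `v` are not connected). -/
noncomputable def wdist (G : SimpleGraph V) (wt : Sym2 V → NNReal) (u v : V) : ℝ≥0∞ :=
  ⨅ p : G.Walk u v, walkWeight wt p

/-- `G` has unique shortest paths: for every pair of connected vertices there is exactly
one walk of minimum total weight. -/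
def HasUniqueShortestPaths (G : SimpleGraph V) (wt : Sym2 V → NNReal) : Prop :=
  ∀ u v : V, G.Reachable u v →
    ∃! p : G.Walk u v, walkWeight wt p = wdist G wt u v

open SimpleGraph

/-!
Split `π(s,v)` at its first use of `f = {a,b}`, crossed from `a` to `b`, and `π(v,x)` at its
last use of `f`. Along a shortest walk to `v` with positive weights the distance to `v` strictly
decreases across each edge, so `π(v,x)` must cross `f` from `b` to `a`. Hence the part of `π(s,v)`
before `f` and the part of `π(v,x)` after `f` avoid `f` and join `s` to `a` and `a` to `x`; together
with `π(y,s)` they give `f`-free detours of length `≤ d(s,v)`, `≤ d(v,x) ≤ d(s,v)` and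
`≤ 4 d(s,v)`. Routing `v → s → a → x` and `x → a → s → y` through them bounds the three
distances in `G − f` by `3`, `6` and `4` times `d_{G−f}(s,v) ≥ d(s,v)`.
-/

namespace SimpleGraph.Walk

variable {G : SimpleGraph V} {u v : V} {f : Sym2 V}

theorem reverse_append_cons {a b : V} (p₁ : G.Walk u a) (h : G.Adj a b) (p₂ : G.Walk b v) :
    (p₁.append (cons h p₂)).reverse = p₂.reverse.append (cons h.symm p₁.reverse) := by
  rw [reverse_append, reverse_cons, ← append_assoc, cons_append, nil_append]

theorem exists_eq_append_cons_first_of_mem_edges (p : G.Walk u v) (hf : f ∈ p.edges) :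
    ∃ (a b : V) (hab : G.Adj a b) (p₁ : G.Walk u a) (p₂ : G.Walk b v),
      s(a, b) = f ∧ p = p₁.append (cons hab p₂) ∧ f ∉ p₁.edges := by
  induction p with
  | nil => simp at hf
  | @cons u u' v h q ih =>
    by_cases he : s(u, u') = f
    · exact ⟨u, u', h, nil, q, he, rfl, by simp⟩
    · obtain ⟨a, b, hab, p₁, p₂, hf', rfl, hp₁⟩ :=
        ih ((List.mem_cons.1 hf).resolve_left (Ne.symm he))
      exact ⟨a, b, hab, cons h p₁, p₂, hf', rfl, by simp [Ne.symm he, hp₁]⟩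

theorem exists_eq_append_cons_last_of_mem_edges (p : G.Walk u v) (hf : f ∈ p.edges) :
    ∃ (a b : V) (hab : G.Adj a b) (p₁ : G.Walk u a) (p₂ : G.Walk b v),
      s(a, b) = f ∧ p = p₁.append (cons hab p₂) ∧ f ∉ p₂.edges := by
  obtain ⟨a, b, hab, p₁, p₂, hf', hp, hp₁⟩ :=
    p.reverse.exists_eq_append_cons_first_of_mem_edges (by simpa using hf)
  refine ⟨b, a, hab.symm, p₂.reverse, p₁.reverse, by rw [Sym2.eq_swap, hf'], ?_, by simpa using hp₁⟩
  rw [← p.reverse_reverse, hp, reverse_append_cons]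

end SimpleGraph.Walk

section WeightedDistance

variable {G : SimpleGraph V} {wt : Sym2 V → NNReal} {u v w z : V}

theorem walkWeight_cons (h : G.Adj u v) (p : G.Walk v w) :
    walkWeight wt (Walk.cons h p) = wt s(u, v) + walkWeight wt p := by
  simp [walkWeight]

theorem walkWeight_append (p : G.Walk u v) (q : G.Walk v w) :
    walkWeight wt (p.append q) = walkWeight wt p + walkWeight wt q := by
  simp [walkWeight, Walk.edges_append]

theorem walkWeight_reverse (p : G.Walk u v) : walkWeight wt p.reverse = walkWeight wt p := by
  simp [walkWeight, Walk.edges_reverse, List.sum_reverse]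

theorem walkWeight_ne_top (p : G.Walk u v) : walkWeight wt p ≠ ⊤ := by
  induction p with
  | nil => simp [walkWeight]
  | cons h p ih => rw [walkWeight_cons]; exact ENNReal.add_ne_top.2 ⟨ENNReal.coe_ne_top, ih⟩

theorem walkWeight_le_cons (h : G.Adj u v) (p : G.Walk v w) :
    walkWeight wt p ≤ walkWeight wt (Walk.cons h p) := by
  rw [walkWeight_cons]; exact le_add_self

theorem walkWeight_le_append_left (p : G.Walk u v) (q : G.Walk v w) :
    walkWeight wt p ≤ walkWeight wt (p.append q) := by
  rw [walkWeight_append]; exact le_self_add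

theorem walkWeight_le_append_right (p : G.Walk u v) (q : G.Walk v w) :
    walkWeight wt q ≤ walkWeight wt (p.append q) := by
  rw [walkWeight_append]; exact le_add_self

theorem wdist_le_walkWeight (p : G.Walk u v) : wdist G wt u v ≤ walkWeight wt p :=
  iInf_le _ p

theorem wdist_comm : wdist G wt u v = wdist G wt v u :=
  le_antisymm
    (le_iInf fun p => iInf_le_of_le p.reverse (walkWeight_reverse p).le)
    (le_iInf fun p => iInf_le_of_le p.reverse (walkWeight_reverse p).le)

theorem wdist_triangle : wdist G wt u w ≤ wdist G wt u v + wdist G wt v w :=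
  calc wdist G wt u w ≤ ⨅ (p : G.Walk u v) (q : G.Walk v w), walkWeight wt p + walkWeight wt q :=
        le_iInf₂ fun p q => (wdist_le_walkWeight (p.append q)).trans (walkWeight_append p q).le
    _ = wdist G wt u v + wdist G wt v w := by
        simp only [wdist, ENNReal.iInf_add, ENNReal.add_iInf]
        exact iInf_comm

theorem wdist_triangle₃ :
    wdist G wt u z ≤ wdist G wt u v + wdist G wt v w + wdist G wt w z :=
  (wdist_triangle (v := w)).trans (by gcongr; exact wdist_triangle)

theorem wdist_le_wdist_deleteEdges (t : Set (Sym2 V)) :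
    wdist G wt u v ≤ wdist (G.deleteEdges t) wt u v :=
  le_iInf fun p => iInf_le_of_le (p.mapLe (G.deleteEdges_le t)) (by
    simp [walkWeight, Walk.mapLe, Walk.edges_map])

theorem wdist_deleteEdges_singleton_le {f : Sym2 V} (p : G.Walk u v) (hp : f ∉ p.edges) :
    wdist (G.deleteEdges {f}) wt u v ≤ walkWeight wt p :=
  iInf_le_of_le (p.toDeleteEdge f hp) (by
    simp [walkWeight, Walk.toDeleteEdge, Walk.toDeleteEdges, Walk.edges_transfer])

theorem walkWeight_eq_wdist_of_append_right {p : G.Walk u v} {q : G.Walk v w}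
    (hpq : walkWeight wt (p.append q) = wdist G wt u w) :
    walkWeight wt q = wdist G wt v w := by
  refine le_antisymm ?_ (wdist_le_walkWeight q)
  refine ENNReal.le_of_add_le_add_left (walkWeight_ne_top (wt := wt) p) ?_
  calc walkWeight wt p + walkWeight wt q = wdist G wt u w := by rw [← walkWeight_append, hpq]
    _ ≤ wdist G wt u v + wdist G wt v w := wdist_triangle
    _ ≤ walkWeight wt p + wdist G wt v w := by gcongr; exact wdist_le_walkWeight p

theorem wdist_lt_wdist_of_append_cons {a b : V} {hab : G.Adj a b} {p₁ : G.Walk u a}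
    {p₂ : G.Walk b v} (hp : walkWeight wt (p₁.append (Walk.cons hab p₂)) = wdist G wt u v)
    (hw : 0 < wt s(a, b)) :
    wdist G wt b v < wdist G wt a v :=
  calc wdist G wt b v
      < wt s(a, b) + wdist G wt b v := by
        rw [add_comm]
        exact ENNReal.lt_add_right
          (ne_top_of_le_ne_top (walkWeight_ne_top p₂) (wdist_le_walkWeight p₂))
          (ENNReal.coe_pos.2 hw).ne'
    _ ≤ wt s(a, b) + walkWeight wt p₂ := add_le_add le_rfl (wdist_le_walkWeight p₂)
    _ = wdist G wt a v := by rw [← walkWeight_cons hab, walkWeight_eq_wdist_of_append_right hp]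

theorem eq_of_shortest_append_cons_into_out {a b c d : V} {hab : G.Adj a b} {hcd : G.Adj c d}
    {p₁ : G.Walk u a} {p₂ : G.Walk b v} {q₁ : G.Walk v c} {q₂ : G.Walk d w}
    (hp : walkWeight wt (p₁.append (Walk.cons hab p₂)) = wdist G wt u v)
    (hq : walkWeight wt (q₁.append (Walk.cons hcd q₂)) = wdist G wt v w)
    (hw : 0 < wt s(a, b)) (he : s(c, d) = s(a, b)) :
    d = a := by
  rcases Sym2.eq_iff.1 he with ⟨rfl, rfl⟩ | ⟨-, hda⟩
  · have hq' : walkWeight wt (q₂.reverse.append (Walk.cons hcd.symm q₁.reverse)) =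
        wdist G wt w v := by
      rw [← Walk.reverse_append_cons q₁ hcd q₂, walkWeight_reverse, hq, wdist_comm]
    exact absurd (wdist_lt_wdist_of_append_cons hp hw)
      (wdist_lt_wdist_of_append_cons hq' (Sym2.eq_swap ▸ hw)).not_gt
  · exact hda

end WeightedDistance

theorem stmt17_general (G : SimpleGraph V) (wt : Sym2 V → NNReal)
    (hwt : ∀ e ∈ G.edgeSet, 0 < wt e)
    (s v x y : V)
    (hvx : wdist G wt v x ≤ wdist G wt s v)
    (hys : wdist G wt y s ≤ 4 * wdist G wt s v)
    (f : Sym2 V)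
    (qsv : G.Walk s v) (hqsv : walkWeight wt qsv = wdist G wt s v)
    (qvx : G.Walk v x) (hqvx : walkWeight wt qvx = wdist G wt v x)
    (qys : G.Walk y s) (hqys : walkWeight wt qys = wdist G wt y s)
    (hf1 : f ∈ qsv.edges) (hf2 : f ∈ qvx.edges)
    (hf4 : f ∉ qys.edges) :
    wdist (G.deleteEdges {f}) wt v x + wdist (G.deleteEdges {f}) wt x y +
        wdist (G.deleteEdges {f}) wt y s ≤
      13 * wdist (G.deleteEdges {f}) wt s v := by
  obtain ⟨a, b, hab, S₁, S₂, rfl, rfl, hS₁⟩ :=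
    qsv.exists_eq_append_cons_first_of_mem_edges hf1
  obtain ⟨c, d, hcd, B₁, B₂, hcd_eq, rfl, hB₂⟩ :=
    qvx.exists_eq_append_cons_last_of_mem_edges hf2
  obtain rfl : a = d :=
    (eq_of_shortest_append_cons_into_out hqsv hqvx (hwt _ hab) hcd_eq).symm
  set G' := G.deleteEdges {s(a, b)}
  set D' := wdist G' wt s v
  have hD' : wdist G wt s v ≤ D' := wdist_le_wdist_deleteEdges _
  have hsa : wdist G' wt s a ≤ D' :=
    (wdist_deleteEdges_singleton_le S₁ hS₁).trans <|
      (walkWeight_le_append_left _ _).trans (hqsv.le.trans hD')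
  have hax : wdist G' wt a x ≤ D' :=
    (wdist_deleteEdges_singleton_le B₂ (hcd_eq ▸ hB₂)).trans <|
      (walkWeight_le_cons hcd B₂).trans <| (walkWeight_le_append_right _ _).trans <|
        hqvx.le.trans (hvx.trans hD')
  have hys' : wdist G' wt y s ≤ 4 * D' :=
    (wdist_deleteEdges_singleton_le qys hf4).trans <| hqys.le.trans (hys.trans (by gcongr))
  have hvx' : wdist G' wt v x ≤ 3 * D' :=
    calc _ ≤ _ := wdist_triangle₃ (v := s) (w := a)
      _ ≤ D' + D' + D' := by rw [wdist_comm (u := v)]; gcongr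
      _ = 3 * D' := by ring
  have hxy' : wdist G' wt x y ≤ 6 * D' :=
    calc _ ≤ _ := wdist_triangle₃ (v := a) (w := s)
      _ ≤ D' + D' + 4 * D' := by
          rw [wdist_comm (u := x), wdist_comm (u := a) (v := s), wdist_comm (u := s) (v := y)]
          gcongr
      _ = 6 * D' := by ring
  calc _ ≤ 3 * D' + 6 * D' + 4 * D' := by gcongr
    _ = 13 * D' := by ring

theorem stmt17 [Fintype V] [DecidableEq V] (G : SimpleGraph V) (wt : Sym2 V → NNReal)
    (hwt : ∀ e ∈ G.edgeSet, 0 < wt e)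
    (huniq : HasUniqueShortestPaths G wt)
    (s v x y : V)
    (hvx : wdist G wt v x ≤ wdist G wt s v)
    (hxy : wdist G wt x y ≤ 2 * wdist G wt s v)
    (hys : wdist G wt y s ≤ 4 * wdist G wt s v)
    (f : Sym2 V) (hf : f ∈ G.edgeSet)
    (hconn : (G.deleteEdges {f}).Reachable s v)
    (qsv : G.Walk s v) (hqsv : walkWeight wt qsv = wdist G wt s v)
    (qvx : G.Walk v x) (hqvx : walkWeight wt qvx = wdist G wt v x)
    (qxy : G.Walk x y) (hqxy : walkWeight wt qxy = wdist G wt x y)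
    (qys : G.Walk y s) (hqys : walkWeight wt qys = wdist G wt y s)
    (hf1 : f ∈ qsv.edges) (hf2 : f ∈ qvx.edges)
    (hf3 : f ∈ qxy.edges) (hf4 : f ∉ qys.edges) :
    wdist (G.deleteEdges {f}) wt v x + wdist (G.deleteEdges {f}) wt x y +
        wdist (G.deleteEdges {f}) wt y s ≤
      13 * wdist (G.deleteEdges {f}) wt s v :=
  stmt17_general G wt hwt s v x y hvx hys f qsv hqsv qvx hqvx qys hqys hf1 hf2 hf4
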